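/- Termination: Let C be a well-formed choreography and let 𝔸 be a single-strand skeleton over ⟦C⟧. Then every reduction sequence 𝔸 →_S 𝔸₁ →_S 𝔸₂ →_S ⋯ using rules (A1) and (A2) is finite; i.e., 𝔸 can be reduced only a finite number of times. -/
import Mathlib


/-! Messages and boxes -/

/-- A message component: a basic value or a box `[M]_{ρ₁ρ₂}` with sending role,
receiving role and a content message (a tuple of components). -/
inductive Comp (V : Type) (Role : Type) : Type where
  | val : V → Comp V Role
  | box : Role → Role → List (Comp V Role) → Comp V Role

/-- A message is a tuple of components. -/
abbrev Msg (V Role : Type) := List (Comp V Role)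

/-- A trace: a finite sequence of directed terms, `true` = transmission (+),
`false` = reception (−). -/
abbrev Trace (V Role : Type) := List (Bool × Msg V Role)

variable {V Role : Type}

/-- `c` is a box. -/
def Comp.IsBox (c : Comp V Role) : Prop := ∃ ρ₁ ρ₂ N, c = Comp.box ρ₁ ρ₂ N

/-- Occurrence of a component (e.g. a box) somewhere in a message,
possibly nested inside boxes: containment `c ⊑ M`. -/
inductive Comp.In (c : Comp V Role) : Msg V Role → Prop where
  | here {M : Msg V Role} : c ∈ M → Comp.In c M
  | nest {M : Msg V Role} {ρ₁ ρ₂ : Role} {N : Msg V Role} :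
      Comp.box ρ₁ ρ₂ N ∈ M → Comp.In c N → Comp.In c M

/-- Strict containment of a component in a box: `c ⊏ b`. -/
def Comp.StrictIn (c b : Comp V Role) : Prop :=
  ∃ ρ₁ ρ₂ N, b = Comp.box ρ₁ ρ₂ N ∧ Comp.In c N

/-- `M₀ †^B M₁` : `M₀` is found outside the set of boxes `B` in `M₁`,
i.e. some occurrence of `M₀` in `M₁` is not nested inside a box of `B`.
An occurrence of the tuple `M₀` at top level is an infix occurrence. -/
inductive FoundOutside (B : Set (Comp V Role)) (M₀ : Msg V Role) : Msg V Role → Prop where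
  | here {M : Msg V Role} : M₀ <:+: M → FoundOutside B M₀ M
  | nest {M : Msg V Role} {ρ₁ ρ₂ : Role} {N : Msg V Role} :
      Comp.box ρ₁ ρ₂ N ∈ M → Comp.box ρ₁ ρ₂ N ∉ B →
      FoundOutside B M₀ N → FoundOutside B M₀ M

/-- `M₀ ⊙^B M₁` : every occurrence of `M₀` in `M₁` is nested inside a box of `B`. -/
def OnlyWithin (B : Set (Comp V Role)) (M₀ M₁ : Msg V Role) : Prop :=
  ¬ FoundOutside B M₀ M₁

/-! Abstract strand spaces and skeletons -/

/-- An abstract strand space: a set (type) of strands with a trace map and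
a role assignment. -/
structure StrandSpace (V Role : Type) where
  Str : Type
  tr : Str → Trace V Role
  roleOf : Str → Role

/-- A node: a position on a strand. -/
def StrandSpace.Node (SS : StrandSpace V Role) : Type :=
  {p : SS.Str × ℕ // p.2 < (SS.tr p.1).length}

variable {SS : StrandSpace V Role}

namespace StrandSpace

def strandOf (n : SS.Node) : SS.Str := n.1.1

def idx (n : SS.Node) : ℕ := n.1.2

def dirTerm (n : SS.Node) : Bool × Msg V Role := (SS.tr n.1.1).get ⟨n.1.2, n.2⟩

/-- The message of a node. -/
def msgAt (n : SS.Node) : Msg V Role := (SS.dirTerm n).2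

/-- `n` is a transmission node. -/
def isPos (n : SS.Node) : Prop := (SS.dirTerm n).1 = true

/-- `n` is a reception node. -/
def isNeg (n : SS.Node) : Prop := (SS.dirTerm n).1 = false

/-- `m ⇒ n` : `n` immediately follows `m` on the same strand. -/
def succ (m n : SS.Node) : Prop := m.1.1 = n.1.1 ∧ n.1.2 = m.1.2 + 1

/-- `m ⇒⁺ n` : `n` strictly follows `m` on the same strand. -/
def sprec (m n : SS.Node) : Prop := m.1.1 = n.1.1 ∧ m.1.2 < n.1.2

/-- `m ⇒* n` : `n` follows (possibly equals) `m` on the same strand. -/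
def spreceq (m n : SS.Node) : Prop := m.1.1 = n.1.1 ∧ m.1.2 ≤ n.1.2

end StrandSpace

/-- A skeleton: a finite set of regular nodes with a partial order consistent
with strand succession, closed under strand predecessors. -/
structure Skeleton (SS : StrandSpace V Role) where
  nodes : Set SS.Node
  finite : nodes.Finite
  le : SS.Node → SS.Node → Prop
  le_mem : ∀ {m n}, le m n → m ∈ nodes ∧ n ∈ nodes
  le_refl : ∀ n ∈ nodes, le n n
  le_trans : ∀ {a b c}, le a b → le b c → le a c
  le_antisymm : ∀ {a b}, le a b → le b a → a = b
  succ_le : ∀ {m n}, SS.succ m n → m ∈ nodes → n ∈ nodes → le m n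
  closed : ∀ {m n}, SS.succ m n → n ∈ nodes → m ∈ nodes

/-- The strict order of a skeleton. -/
def Skeleton.lt (A : Skeleton SS) (m n : SS.Node) : Prop := A.le m n ∧ m ≠ n

/-- A single-strand skeleton. -/
def Skeleton.SingleStrand (A : Skeleton SS) : Prop :=
  ∀ m ∈ A.nodes, ∀ n ∈ A.nodes, SS.strandOf m = SS.strandOf n

/-! Cuts -/

/-- `Cut(M,B,𝔸)`. -/
def Cut (M : Msg V Role) (B : Set (Comp V Role)) (A : Skeleton SS) : Set SS.Node :=
  {n | n ∈ A.nodes ∧ ∃ m, A.le m n ∧ FoundOutside B M (SS.msgAt m)}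

/-- `Cut(M,B,𝔸)` is defined. -/
def CutDefined (M : Msg V Role) (B : Set (Comp V Role)) (A : Skeleton SS) : Prop :=
  ∃ n ∈ A.nodes, FoundOutside B M (SS.msgAt n)

/-- `n` is a `≺_𝔸`-minimal node of `Cut(M,B,𝔸)`. -/
def CutMinimal (M : Msg V Role) (B : Set (Comp V Role)) (A : Skeleton SS)
    (n : SS.Node) : Prop :=
  n ∈ Cut M B A ∧ ∀ m ∈ Cut M B A, A.le m n → m = n

/-- `Cut(M,B,𝔸)` is solved w.r.t. the compromised roles `R`. -/
def CutSolved (R : Set Role) (M : Msg V Role) (B : Set (Comp V Role))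
    (A : Skeleton SS) : Prop :=
  ∀ n, CutMinimal M B A n →
    SS.isPos n ∨
    (∃ ρ₁ ρ₂ N, M = [Comp.box ρ₁ ρ₂ N] ∧ ρ₁ ∈ R) ∨
    (∃ b ∈ B, ∃ ρ₁ ρ₂ N, b = Comp.box ρ₁ ρ₂ N ∧ ρ₂ ∈ R)
/-! The abstract penetrator and realized skeletons -/

/-- Traces of the abstract penetrator `𝒫_R`. -/
inductive PenTrace (R : Set Role) : Trace V Role → Prop where
  | comp (M₀ M₁ : Msg V Role) :
      PenTrace R [(false, M₀), (false, M₁), (true, M₀ ++ M₁)]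
  | sep (M₀ M₁ : Msg V Role) :
      PenTrace R [(false, M₀ ++ M₁), (true, M₀), (true, M₁)]
  | box (M : Msg V Role) (ρ₁ ρ₂ : Role) : ρ₁ ∈ R →
      PenTrace R [(false, M), (true, [Comp.box ρ₁ ρ₂ M])]
  | open_ (M : Msg V Role) (ρ₁ ρ₂ : Role) : ρ₂ ∈ R →
      PenTrace R [(false, [Comp.box ρ₁ ρ₂ M]), (true, M)]
  | atom (vs : List V) :
      PenTrace R [(true, vs.map Comp.val)]

/-- The nodes of a graph of interaction: regular nodes of the skeleton,
together with nodes of the chosen penetrator strand instances. -/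
def GNode (SS : StrandSpace V Role) (A : Skeleton SS) {ι : Type}
    (ptr : ι → Trace V Role) : Type :=
  {n : SS.Node // n ∈ A.nodes} ⊕ (Σ i : ι, Fin (ptr i).length)

def gdir {SS : StrandSpace V Role} {A : Skeleton SS} {ι : Type}
    {ptr : ι → Trace V Role} : GNode SS A ptr → Bool × Msg V Role
  | .inl n => SS.dirTerm n.1
  | .inr ⟨i, j⟩ => (ptr i).get j

def gmsg {SS : StrandSpace V Role} {A : Skeleton SS} {ι : Type}
    {ptr : ι → Trace V Role} (g : GNode SS A ptr) : Msg V Role := (gdir g).2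

def gpos {SS : StrandSpace V Role} {A : Skeleton SS} {ι : Type}
    {ptr : ι → Trace V Role} (g : GNode SS A ptr) : Prop := (gdir g).1 = true

/-- A graph of interaction of `𝔸` w.r.t. `𝒫_R`: a collection of penetrator
strand instances plus communication edges from transmission nodes to reception
nodes carrying the same message. -/
structure Interaction (SS : StrandSpace V Role) (R : Set Role) (A : Skeleton SS) where
  ι : Type
  ptr : ι → Trace V Role
  pen : ∀ i, PenTrace R (ptr i)
  edge : GNode SS A ptr → GNode SS A ptr → Prop
  edge_spec : ∀ g h, edge g h → gpos g ∧ ¬ gpos h ∧ gmsg g = gmsg h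

/-- One step of the precedence `⪯_ℬ` of a graph of interaction. -/
inductive IStep {SS : StrandSpace V Role} {R : Set Role} {A : Skeleton SS}
    (I : Interaction SS R A) : GNode SS A I.ptr → GNode SS A I.ptr → Prop where
  | skel {m n : {x : SS.Node // x ∈ A.nodes}} : A.le m.1 n.1 →
      IStep I (.inl m) (.inl n)
  | pen {i : I.ι} {j k : Fin (I.ptr i).length} : (j : ℕ) + 1 = (k : ℕ) →
      IStep I (.inr ⟨i, j⟩) (.inr ⟨i, k⟩)
  | edge {g h : GNode SS A I.ptr} : I.edge g h → IStep I g h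

/-- `⪯_ℬ`. -/
def Reach {SS : StrandSpace V Role} {R : Set Role} {A : Skeleton SS}
    (I : Interaction SS R A) : GNode SS A I.ptr → GNode SS A I.ptr → Prop :=
  Relation.ReflTransGen (IStep I)

/-- `𝔸` is realized w.r.t. the abstract penetrator `𝒫_R`. -/
def Realized (R : Set Role) (A : Skeleton SS) : Prop :=
  ∃ I : Interaction SS R A,
    (∀ g h, Reach I g h → Reach I h g → g = h) ∧
    (∀ g : GNode SS A I.ptr, ¬ gpos g → ∃ h, I.edge h g) ∧
    (∀ m n : {x : SS.Node // x ∈ A.nodes}, Reach I (.inl m) (.inl n) → A.le m.1 n.1)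

/-- `𝔸` is delivery-guaranteed. -/
def DG (R : Set Role) (A : Skeleton SS) : Prop :=
  ∀ n ∈ A.nodes, SS.isPos n →
    ∀ ρ₁ ρ₂ N, SS.msgAt n = [Comp.box ρ₁ ρ₂ N] → ρ₂ ∉ R →
      ∃ n' ∈ A.nodes, SS.isNeg n' ∧ SS.strandOf n' ≠ SS.strandOf n ∧
        SS.msgAt n' = SS.msgAt n
/-! The reduction rules (A1) and (A2) -/

/-- The premise of rule (A1), for reception node `n`, box `c`, set of boxes `B`
and transmission node `m`. -/
def A1Premise (R : Set Role) (A : Skeleton SS) (n : SS.Node) (c : Comp V Role)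
    (B : Set (Comp V Role)) (m : SS.Node) : Prop :=
  n ∈ A.nodes ∧ SS.isNeg n ∧
  (∃ ρ₁ ρ₂ N, c = Comp.box ρ₁ ρ₂ N ∧ ρ₁ ∉ R) ∧
  FoundOutside B [c] (SS.msgAt n) ∧
  m ∉ A.nodes ∧ SS.isPos m ∧ FoundOutside B [c] (SS.msgAt m) ∧
  (∀ m', (A.lt m' n ∨ SS.sprec m' m) → OnlyWithin B [c] (SS.msgAt m'))

/-- The premise of rule (A2), for transmission node `n` and reception node `m`. -/
def A2Premise (R : Set Role) (A : Skeleton SS) (n m : SS.Node) : Prop :=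
  n ∈ A.nodes ∧ SS.isPos n ∧
  (∃ ρ₁ ρ₂ N, SS.msgAt n = [Comp.box ρ₁ ρ₂ N] ∧ ρ₂ ∉ R) ∧
  (¬ ∃ m' ∈ A.nodes, SS.isNeg m' ∧ A.lt n m' ∧ SS.msgAt m' = SS.msgAt n) ∧
  SS.isNeg m ∧ SS.msgAt m = SS.msgAt n

/-- `A' = A ∪ ↑m`, with the ordering strengthened so that `pre ≺ post`:
the nodes of `A'` are those of `A` plus the strand predecessors of `m`, and
`⪯_{A'}` is generated by `⪯_A`, strand succession up to `m`, and `pre ≺ post`. -/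
def IsUnionUp (A A' : Skeleton SS) (m pre post : SS.Node) : Prop :=
  A'.nodes = A.nodes ∪ {x | SS.spreceq x m} ∧
  ∀ x y, A'.le x y ↔ (x ∈ A'.nodes ∧ y ∈ A'.nodes ∧
    Relation.ReflTransGen
      (fun a b => A.le a b ∨ (SS.succ a b ∧ SS.spreceq b m) ∨ (a = pre ∧ b = post))
      x y)

/-- A reduction step by rule (A1). -/
def ReducesA1 (R : Set Role) (A A' : Skeleton SS) : Prop :=
  ∃ n c B m, A1Premise R A n c B m ∧ IsUnionUp A A' m m n

/-- A reduction step by rule (A2). -/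
def ReducesA2 (R : Set Role) (A A' : Skeleton SS) : Prop :=
  ∃ n m, A2Premise R A n m ∧ IsUnionUp A A' m n m

/-- The reduction relation `𝔸 →_S 𝔸'`. -/
def Reduces (R : Set Role) (A A' : Skeleton SS) : Prop :=
  ReducesA1 R A A' ∨ ReducesA2 R A A'

/-! Substitutions and homomorphisms -/

/-- Substitution of basic values for basic values in a component. -/
def Comp.subst (σ : V → V) : Comp V Role → Comp V Role
  | .val v => .val (σ v)
  | .box ρ₁ ρ₂ N => .box ρ₁ ρ₂ (N.attach.map (fun c => Comp.subst σ c.1))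
decreasing_by
  have := List.sizeOf_lt_of_mem c.2
  simp only [Comp.box.sizeOf_spec]
  omega

/-- Substitution in a message. -/
def Msg.subst (σ : V → V) (M : Msg V Role) : Msg V Role := M.map (Comp.subst σ)

/-- Substitution in a trace. -/
def Trace.subst (σ : V → V) (t : Trace V Role) : Trace V Role :=
  t.map (fun d => (d.1, Msg.subst σ d.2))

/-- The strand space is closed under substitutions of basic values. -/
def StrandSpace.ClosedUnderSubst (SS : StrandSpace V Role) : Prop :=
  ∀ (s : SS.Str) (σ : V → V), ∃ s' : SS.Str,
    SS.tr s' = Trace.subst σ (SS.tr s) ∧ SS.roleOf s' = SS.roleOf s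

/-- A homomorphism of skeletons: maps nodes to nodes preserving strand
structure, positions, directions, messages up to a substitution of basic
values, and the precedence ordering. -/
structure Hom (A₀ A₁ : Skeleton SS) where
  f : SS.Node → SS.Node
  σ : V → V
  maps : ∀ n ∈ A₀.nodes, f n ∈ A₁.nodes
  idx_eq : ∀ n ∈ A₀.nodes, SS.idx (f n) = SS.idx n
  strand_eq : ∀ m ∈ A₀.nodes, ∀ n ∈ A₀.nodes,
    SS.strandOf m = SS.strandOf n → SS.strandOf (f m) = SS.strandOf (f n)
  dir_eq : ∀ n ∈ A₀.nodes, (SS.isPos (f n) ↔ SS.isPos n)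
  msg_eq : ∀ n ∈ A₀.nodes, SS.msgAt (f n) = Msg.subst σ (SS.msgAt n)
  mono : ∀ m n, A₀.le m n → A₁.le (f m) (f n)

/-- A homomorphism is node-wise injective. -/
def Hom.nwInj {A₀ A₁ : Skeleton SS} (H : Hom A₀ A₁) : Prop :=
  Set.InjOn H.f A₀.nodes

/-- `H₀ ≤ H₁` : `L ∘ H₀ = H₁` for some node-wise injective `L`. -/
def HomLE {A B₀ B₁ : Skeleton SS} (H₀ : Hom A B₀) (H₁ : Hom A B₁) : Prop :=
  ∃ L : Hom B₀ B₁, L.nwInj ∧ ∀ n ∈ A.nodes, L.f (H₀.f n) = H₁.f n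

/-- `H` is an isomorphism of skeletons. -/
def Hom.IsIso {A₀ A₁ : Skeleton SS} (H : Hom A₀ A₁) : Prop :=
  Set.BijOn H.f A₀.nodes A₁.nodes ∧
  ∃ G : Hom A₁ A₀, (∀ n ∈ A₀.nodes, G.f (H.f n) = n) ∧
    (∀ n ∈ A₁.nodes, H.f (G.f n) = n)

/-- Two skeletons are isomorphic. -/
def SkelIso (A₀ A₁ : Skeleton SS) : Prop := ∃ H : Hom A₀ A₁, H.IsIso

/-- Two homomorphisms with the same source are isomorphic. -/
def HomIso {A B₀ B₁ : Skeleton SS} (H₀ : Hom A B₀) (H₁ : Hom A B₁) : Prop :=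
  ∃ L : Hom B₀ B₁, L.IsIso ∧ ∀ n ∈ A.nodes, L.f (H₀.f n) = H₁.f n

/-- `H : 𝔸₀ → 𝔸'` is a shape for `𝔸₀`: node-wise minimal among homomorphisms
of `𝔸₀` into realized skeletons. -/
def IsShape (R : Set Role) {A A' : Skeleton SS} (H : Hom A A') : Prop :=
  Realized R A' ∧
  ∀ (A'' : Skeleton SS) (H' : Hom A A''), Realized R A'' → HomLE H' H → HomIso H' H

/-- `H : 𝔸₀ → 𝔸'` is a DG shape for `𝔸₀`: node-wise minimal among
homomorphisms of `𝔸₀` into realized delivery-guaranteed skeletons. -/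
def IsDGShape (R : Set Role) {A A' : Skeleton SS} (H : Hom A A') : Prop :=
  (Realized R A' ∧ DG R A') ∧
  ∀ (A'' : Skeleton SS) (H' : Hom A A''), (Realized R A'' ∧ DG R A'') →
    HomLE H' H → HomIso H' H

/-- An augmentation: the inclusion of `A` into `A'` where all new nodes lie on
a single strand and the ordering of `A'` extends that of `A`. -/
def IsAugmentation (A A' : Skeleton SS) : Prop :=
  A.nodes ⊆ A'.nodes ∧
  (∀ m n, A.le m n → A'.le m n) ∧
  (∀ x ∈ A'.nodes \ A.nodes, ∀ y ∈ A'.nodes \ A.nodes, SS.strandOf x = SS.strandOf y)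
/-! A protocol description calculus (choreographies) -/

/-- A choreography: either the inactive term `0`, or a branching interaction
`Σᵢ ρ₁ → ρ₂ : opᵢ⟨M̃ᵢ⟩. Cᵢ`. Each branch carries a label `opᵢ` (a basic
value), a tuple of messages `M̃ᵢ` and a continuation. -/
inductive Chor (V Role : Type) : Type where
  | nil : Chor V Role
  | comm : Role → Role → List (V × List (Msg V Role) × Chor V Role) → Chor V Role

variable {V Role : Type}

/-- The list of labels occurring in a choreography. -/
def Chor.labelList : Chor V Role → List V
  | .nil => []
  | .comm _ _ brs => brs.attach.flatMap (fun b => b.1.1 :: Chor.labelList b.1.2.2)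
decreasing_by
  obtain ⟨⟨op, Ms, C⟩, hb⟩ := b
  have := List.sizeOf_lt_of_mem hb
  simp only [Chor.comm.sizeOf_spec, Prod.mk.sizeOf_spec] at *
  omega

/-- `top(C)`. -/
def Chor.top : Chor V Role → Set Role
  | .nil => Set.univ
  | .comm ρ₁ _ _ => {ρ₁}

/-- The boxed message `[opᵢ, M̃ᵢ]_{ρ₁ρ₂}` exchanged in an interaction. -/
def interMsg (ρ₁ ρ₂ : Role) (op : V) (Ms : List (Msg V Role)) : Msg V Role :=
  [Comp.box ρ₁ ρ₂ (Comp.val op :: Ms.flatten)]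

/-- A message is box-free. -/
def BoxFree (M : Msg V Role) : Prop := ∀ w ∈ M, ∃ v, w = Comp.val v

/-- The typing judgement `Γ ⊢ C` of well-formedness. -/
inductive WT [DecidableEq Role] : (Role → Set (Msg V Role)) → Chor V Role → Prop where
  | inact {Γ} : WT Γ Chor.nil
  | interact {Γ ρ₁ ρ₂ brs} :
      (∀ b ∈ brs, ∀ M ∈ b.2.1, M ∈ Γ ρ₁) →
      (∀ b ∈ brs, WT (Function.update Γ ρ₂ (Γ ρ₂ ∪ {M | M ∈ b.2.1})) b.2.2) →
      (∀ b ∈ brs, ρ₂ ∈ Chor.top b.2.2) →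
      WT Γ (Chor.comm ρ₁ ρ₂ brs)
  | box1 {Γ C} {M : Msg V Role} {ρ₁ ρ₂ : Role} :
      WT Γ C → M ∈ Γ ρ₁ →
      WT (Function.update Γ ρ₁ (insert [Comp.box ρ₁ ρ₂ M] (Γ ρ₁))) C
  | box2 {Γ C} {M : Msg V Role} {ρ₁ ρ₂ : Role} :
      WT Γ C → [Comp.box ρ₁ ρ₂ M] ∈ Γ ρ₂ →
      WT (Function.update Γ ρ₂ (insert M (Γ ρ₂))) C

/-- A well-formed choreography: distinct labels, and typable from an
environment assigning box-free messages to roles. -/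
def Chor.WellFormed [DecidableEq Role] (C : Chor V Role) : Prop :=
  C.labelList.Nodup ∧
  ∃ Γ : Role → Set (Msg V Role), (∀ ρ, ∀ M ∈ Γ ρ, BoxFree M) ∧ WT Γ C

/-- The abstract strand semantics `⟦C⟧`, given as the map `who` from each role
`ρ` to the set of traces of the strands of `ρ`; the strand set `S` of `⟦C⟧` is
the union of the images. -/
def Chor.sem [DecidableEq Role] : Chor V Role → Role → Set (Trace V Role)
  | .nil, _ => {[(true, ([] : Msg V Role))]}
  | .comm ρ₁ ρ₂ brs, ρ =>
      ⋃ b ∈ brs.attach,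
        (if ρ = ρ₁ then
          (fun t => (true, interMsg ρ₁ ρ₂ b.1.1 b.1.2.1) :: t) '' Chor.sem b.1.2.2 ρ
         else if ρ = ρ₂ then
          (fun t => (false, interMsg ρ₁ ρ₂ b.1.1 b.1.2.1) :: t) '' Chor.sem b.1.2.2 ρ
         else Chor.sem b.1.2.2 ρ)
decreasing_by
  all_goals {
    obtain ⟨⟨op, Ms, C⟩, hb⟩ := b
    have := List.sizeOf_lt_of_mem hb
    simp only [Chor.comm.sizeOf_spec, Prod.mk.sizeOf_spec] at *
    omega }

/-- A label of `C`. -/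
def Chor.IsLabel (C : Chor V Role) (v : V) : Prop := v ∈ C.labelList

/-- A parameter substitution for `C`: a substitution fixing the labels of `C`. -/
def ParamSubst (C : Chor V Role) (σ : V → V) : Prop :=
  ∀ v, C.IsLabel v → σ v = v

/-- The strand space of a choreography `C`, relative to the compromised roles
`R`: its strands are the strands of regular (non-compromised) roles obtained
from `⟦C⟧` by parameter substitutions, each marked with its role. -/
def chorSS [DecidableEq Role] (C : Chor V Role) (R : Set Role) : StrandSpace V Role where
  Str := {p : Role × Trace V Role //
    p.1 ∉ R ∧ ∃ t ∈ C.sem p.1, ∃ σ, ParamSubst C σ ∧ p.2 = Trace.subst σ t}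
  tr := fun s => s.1.2
  roleOf := fun s => s.1.1

/-! STATEMENT 13 (Termination): starting from a single-strand skeleton over
`⟦C⟧`, for `C` a well-formed choreography, there is no infinite reduction
sequence; `𝔸` can be reduced only a finite number of times. -/

/-! Auxiliary lemmas for termination -/

theorem sem_finite {V Role : Type} [DecidableEq Role] (C : Chor V Role) (ρ : Role) :
    (C.sem ρ).Finite := by
  cases C with
  | nil => rw [Chor.sem]; exact Set.finite_singleton _
  | comm ρ₁ ρ₂ brs =>
    rw [Chor.sem]
    refine Set.Finite.biUnion (List.finite_toSet _) ?_
    rintro ⟨⟨op, Ms, C'⟩, hb⟩ _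
    have ih := sem_finite C' ρ
    split
    · exact ih.image _
    · split
      · exact ih.image _
      · exact ih
termination_by sizeOf C
decreasing_by
  all_goals {
    have := List.sizeOf_lt_of_mem hb
    simp only [Chor.comm.sizeOf_spec, Prod.mk.sizeOf_spec] at *
    omega }

theorem chorStr_finite {V Role : Type} [Finite V] [Finite Role] [DecidableEq Role]
    (C : Chor V Role) (R : Set Role) : Finite ((chorSS C R).Str) := by
  have hT : (⋃ ρ : Role, ⋃ σ : V → V, Trace.subst σ '' (C.sem ρ)).Finite :=
    Set.finite_iUnion (fun ρ => Set.finite_iUnion (fun σ => (sem_finite C ρ).image _))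
  have hs : {p : Role × Trace V Role |
      p.1 ∉ R ∧ ∃ t ∈ C.sem p.1, ∃ σ, ParamSubst C σ ∧ p.2 = Trace.subst σ t}.Finite := by
    refine (Set.finite_univ.prod hT).subset ?_
    rintro ⟨ρ, tr⟩ ⟨-, t, ht, σ, -, rfl⟩
    exact ⟨trivial, Set.mem_iUnion.2 ⟨ρ, Set.mem_iUnion.2 ⟨σ, Set.mem_image_of_mem _ ht⟩⟩⟩
  exact hs.to_subtype

theorem node_finite {V Role : Type} (SS : StrandSpace V Role) [Finite SS.Str] :
    Finite SS.Node := by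
  have h : {p : SS.Str × ℕ | p.2 < (SS.tr p.1).length}.Finite := by
    refine (Set.finite_iUnion (fun s : SS.Str =>
      (Set.finite_Iio (SS.tr s).length).image (fun i => (s, i)))).subset ?_
    rintro ⟨s, i⟩ hi
    exact Set.mem_iUnion.2 ⟨s, ⟨i, hi, rfl⟩⟩
  exact h.to_subtype

/-- The measure: number of nodes plus number of order pairs. -/
noncomputable def skMeas {V Role : Type} {SS : StrandSpace V Role} (A : Skeleton SS) : ℕ :=
  A.nodes.ncard + {p : SS.Node × SS.Node | A.le p.1 p.2}.ncard

theorem le_mono_of_unionUp {V Role : Type} {SS : StrandSpace V Role}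
    {A A' : Skeleton SS} {m pre post : SS.Node} (hu : IsUnionUp A A' m pre post) :
    (∀ x y, A.le x y → A'.le x y) := by
  intro x y hxy
  have hmem := A.le_mem hxy
  have hsub : A.nodes ⊆ A'.nodes := by rw [hu.1]; exact Set.subset_union_left
  exact (hu.2 x y).2 ⟨hsub hmem.1, hsub hmem.2, Relation.ReflTransGen.single (Or.inl hxy)⟩

theorem meas_lt_of_reduces {V Role : Type} {SS : StrandSpace V Role} [Finite SS.Node]
    {R : Set Role} {A A' : Skeleton SS} (h : Reduces R A A') : skMeas A < skMeas A' := by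
  have key : ∀ (m pre post : SS.Node), IsUnionUp A A' m pre post →
      (m ∉ A.nodes ∨ (A'.le pre post ∧ ¬ A.le pre post)) → skMeas A < skMeas A' := by
    intro m pre post hu hd
    have hnsub : A.nodes ⊆ A'.nodes := by rw [hu.1]; exact Set.subset_union_left
    have hlsub : {p : SS.Node × SS.Node | A.le p.1 p.2} ⊆
        {p : SS.Node × SS.Node | A'.le p.1 p.2} := by
      rintro ⟨x, y⟩ hxy
      exact le_mono_of_unionUp hu x y hxy
    rcases hd with hm | ⟨hle', hnle⟩
    · have hmem' : m ∈ A'.nodes := by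
        rw [hu.1]; exact Or.inr ⟨rfl, le_refl _⟩
      have h1 : A.nodes.ncard < A'.nodes.ncard :=
        Set.ncard_lt_ncard ⟨hnsub, fun hc => hm (hc hmem')⟩ (Set.toFinite _)
      have h2 : {p : SS.Node × SS.Node | A.le p.1 p.2}.ncard ≤
          {p : SS.Node × SS.Node | A'.le p.1 p.2}.ncard :=
        Set.ncard_le_ncard hlsub (Set.toFinite _)
      unfold skMeas; omega
    · have h1 : A.nodes.ncard ≤ A'.nodes.ncard :=
        Set.ncard_le_ncard hnsub (Set.toFinite _)
      have h2 : {p : SS.Node × SS.Node | A.le p.1 p.2}.ncard <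
          {p : SS.Node × SS.Node | A'.le p.1 p.2}.ncard := by
        refine Set.ncard_lt_ncard ⟨hlsub, fun hc => ?_⟩ (Set.toFinite _)
        exact hnle (hc (show (pre, post) ∈ _ from hle'))
      unfold skMeas; omega
  rcases h with ⟨n, c, B, m, hp, hu⟩ | ⟨n, m, hp, hu⟩
  · exact key m m n hu (Or.inl hp.2.2.2.2.1)
  · by_cases hm : m ∈ A.nodes
    · refine key m n m hu (Or.inr ⟨?_, ?_⟩)
      · refine (hu.2 n m).2 ⟨?_, ?_, Relation.ReflTransGen.single (Or.inr (Or.inr ⟨rfl, rfl⟩))⟩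
        · rw [hu.1]; exact Or.inl hp.1
        · rw [hu.1]; exact Or.inr ⟨rfl, le_refl _⟩
      · intro hle
        have hne : n ≠ m := by
          intro he
          have h1 : (SS.dirTerm n).1 = true := hp.2.1
          have h2 : (SS.dirTerm m).1 = false := hp.2.2.2.2.1
          rw [he, h2] at h1; exact Bool.noConfusion h1
        exact hp.2.2.2.1 ⟨m, hm, hp.2.2.2.2.1, ⟨hle, hne⟩, hp.2.2.2.2.2⟩
    · exact key m n m hu (Or.inl hm)

theorem termination
    {V Role : Type} [Fintype V] [Fintype Role] [DecidableEq Role]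
    (C : Chor V Role) (hwf : C.WellFormed) (R : Set Role)
    (A : Skeleton (chorSS C R)) (hsingle : A.SingleStrand) :
    ¬ ∃ f : ℕ → Skeleton (chorSS C R),
        f 0 = A ∧ ∀ i, Reduces R (f i) (f (i + 1)) := by
  rintro ⟨f, -, hstep⟩
  have : Finite ((chorSS C R).Str) := chorStr_finite C R
  have : Finite ((chorSS C R).Node) := node_finite _
  have hmono : ∀ i, skMeas (f 0) + i ≤ skMeas (f i) := by
    intro i
    induction i with
    | zero => simp
    | succ k ih =>
      have := meas_lt_of_reduces (hstep k)
      omega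
  set K := (Set.univ : Set ((chorSS C R).Node)).ncard +
    (Set.univ : Set ((chorSS C R).Node × (chorSS C R).Node)).ncard with hK
  have hbound : ∀ i, skMeas (f i) ≤ K := by
    intro i
    unfold skMeas
    have h1 := Set.ncard_le_ncard (Set.subset_univ (f i).nodes) Set.finite_univ
    have h2 := Set.ncard_le_ncard
      (Set.subset_univ {p : (chorSS C R).Node × (chorSS C R).Node | (f i).le p.1 p.2})
      Set.finite_univ
    omega
  have := hmono (K + 1)
  have := hbound (K + 1)
  omega
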